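/- For every ℤ-linear automorphism θ of the lattice L_BZ that maps the set of BZ triangles onto itself, there exists a unique ℤ-linear automorphism θ' of the lattice Λ such that pr(θ(T)) = θ'(pr(T)) for all T ∈ L_BZ; moreover this θ' satisfies c(θ'(t)) = c(t) for all t ∈ Λ. -/
import Mathlib


/-- The lattice `L_BZ` of integer labellings `(y₁,y₂,y₃,z₁,…,z₆)` (indexed `0,…,8`)
with `z₁−z₄ = z₅−z₂ = z₃−z₆`, as a ℤ-submodule of `ℤ⁹`. -/
def Lbz : Submodule ℤ (Fin 9 → ℤ) where
  carrier := {T | T 3 - T 6 = T 7 - T 4 ∧ T 7 - T 4 = T 5 - T 8}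
  add_mem' := by
    rintro a b ⟨ha1, ha2⟩ ⟨hb1, hb2⟩
    refine ⟨?_, ?_⟩ <;> simp only [Pi.add_apply] <;> omega
  zero_mem' := by refine ⟨?_, ?_⟩ <;> simp
  smul_mem' := by
    rintro m a ⟨h1, h2⟩
    refine ⟨?_, ?_⟩ <;> simp only [Pi.smul_apply, smul_eq_mul]
    · linear_combination m * h1
    · linear_combination m * h2

/-- The set of BZ triangles: the elements of `L_BZ` with nonnegative coordinates. -/
def BZset : Set Lbz := {v | ∀ i, 0 ≤ (v : Fin 9 → ℤ) i}

/-- projection to `(ℓ₁,ℓ₂,m₁,m₂,n₁,n₂)`. -/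
def pr (T : Fin 9 → ℤ) : Fin 6 → ℤ :=
  ![T 1 + T 6, T 2 + T 7, T 2 + T 8, T 0 + T 3, T 0 + T 4, T 1 + T 5]

/-- the SU(3) triple multiplicity: number of BZ triangles lying over `t`. -/
noncomputable def c (t : Fin 6 → ℤ) : ℕ :=
  Nat.card {T : Fin 9 → ℤ // ((∀ i, 0 ≤ T i) ∧ T ∈ Lbz) ∧ pr T = t}

/-- The lattice Λ of points `(ℓ₁,ℓ₂,m₁,m₂,n₁,n₂) ∈ ℤ⁶` with
`ℓ₁+m₁+n₁ ≡ ℓ₂+m₂+n₂ (mod 3)`, as a ℤ-submodule of `ℤ⁶`. -/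
def latticeTM : Submodule ℤ (Fin 6 → ℤ) where
  carrier := {t | (3 : ℤ) ∣ (t 0 + t 2 + t 4 - t 1 - t 3 - t 5)}
  add_mem' := by
    rintro a b ⟨k, hk⟩ ⟨l, hl⟩
    exact ⟨k + l, by simp only [Pi.add_apply]; linarith⟩
  zero_mem' := ⟨0, by simp⟩
  smul_mem' := by
    rintro m a ⟨k, hk⟩
    refine ⟨m * k, ?_⟩
    simp only [Pi.smul_apply, smul_eq_mul]
    linear_combination m * hk

/-- The projection `pr`, as a map from `L_BZ` to `Λ`. -/
def prM (T : Lbz) : latticeTM :=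
  ⟨pr (T : Fin 9 → ℤ), by
    obtain ⟨T, h1, h2⟩ := T
    refine ⟨T 6 - T 3, ?_⟩
    show (T 1 + T 6) + (T 2 + T 8) + (T 0 + T 4) - (T 2 + T 7) - (T 0 + T 3)
        - (T 1 + T 5) = 3 * (T 6 - T 3)
    omega⟩

/- ### auxiliary development -/


lemma ext9 (u v : Lbz) (h0 : (u:Fin 9 → ℤ) 0 = (v:Fin 9 → ℤ) 0)
    (h1 : (u:Fin 9 → ℤ) 1 = (v:Fin 9 → ℤ) 1) (h2 : (u:Fin 9 → ℤ) 2 = (v:Fin 9 → ℤ) 2)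
    (h3 : (u:Fin 9 → ℤ) 3 = (v:Fin 9 → ℤ) 3) (h4 : (u:Fin 9 → ℤ) 4 = (v:Fin 9 → ℤ) 4)
    (h5 : (u:Fin 9 → ℤ) 5 = (v:Fin 9 → ℤ) 5) (h6 : (u:Fin 9 → ℤ) 6 = (v:Fin 9 → ℤ) 6)
    (h7 : (u:Fin 9 → ℤ) 7 = (v:Fin 9 → ℤ) 7) (h8 : (u:Fin 9 → ℤ) 8 = (v:Fin 9 → ℤ) 8) :
    u = v :=
  Subtype.ext (funext fun i => by fin_cases i <;> assumption)

lemma bz9 (u : Lbz) (h0 : 0 ≤ (u:Fin 9 → ℤ) 0) (h1 : 0 ≤ (u:Fin 9 → ℤ) 1)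
    (h2 : 0 ≤ (u:Fin 9 → ℤ) 2) (h3 : 0 ≤ (u:Fin 9 → ℤ) 3) (h4 : 0 ≤ (u:Fin 9 → ℤ) 4)
    (h5 : 0 ≤ (u:Fin 9 → ℤ) 5) (h6 : 0 ≤ (u:Fin 9 → ℤ) 6) (h7 : 0 ≤ (u:Fin 9 → ℤ) 7)
    (h8 : 0 ≤ (u:Fin 9 → ℤ) 8) : u ∈ BZset :=
  fun i => by fin_cases i <;> assumption

def AY1 : Lbz := ⟨![1,0,0,0,0,0,0,0,0], by constructor <;> decide⟩
def AY2 : Lbz := ⟨![0,1,0,0,0,0,0,0,0], by constructor <;> decide⟩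
def AY3 : Lbz := ⟨![0,0,1,0,0,0,0,0,0], by constructor <;> decide⟩
def AR1 : Lbz := ⟨![0,0,0,1,0,0,1,0,0], by constructor <;> decide⟩
def AR2 : Lbz := ⟨![0,0,0,0,1,0,0,1,0], by constructor <;> decide⟩
def AR3 : Lbz := ⟨![0,0,0,0,0,1,0,0,1], by constructor <;> decide⟩
def AP  : Lbz := ⟨![0,0,0,1,0,1,0,1,0], by constructor <;> decide⟩
def AQ  : Lbz := ⟨![0,0,0,0,1,0,1,0,1], by constructor <;> decide⟩
def dE  : Lbz := ⟨![1,1,1,-1,-1,-1,-1,-1,-1], by constructor <;> decide⟩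

def Atom (v : Lbz) : Prop :=
  v ∈ BZset ∧ v ≠ 0 ∧
    ∀ u w : Lbz, u ∈ BZset → w ∈ BZset → u + w = v → u = 0 ∨ w = 0

lemma zero9 (u : Lbz) (h0 : (u:Fin 9 → ℤ) 0 = 0) (h1 : (u:Fin 9 → ℤ) 1 = 0)
    (h2 : (u:Fin 9 → ℤ) 2 = 0) (h3 : (u:Fin 9 → ℤ) 3 = 0) (h4 : (u:Fin 9 → ℤ) 4 = 0)
    (h5 : (u:Fin 9 → ℤ) 5 = 0) (h6 : (u:Fin 9 → ℤ) 6 = 0) (h7 : (u:Fin 9 → ℤ) 7 = 0)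
    (h8 : (u:Fin 9 → ℤ) 8 = 0) : u = 0 :=
  ext9 u 0 h0 h1 h2 h3 h4 h5 h6 h7 h8

lemma le9 (a v : Lbz) (h0 : (a:Fin 9 → ℤ) 0 ≤ (v:Fin 9 → ℤ) 0)
    (h1 : (a:Fin 9 → ℤ) 1 ≤ (v:Fin 9 → ℤ) 1) (h2 : (a:Fin 9 → ℤ) 2 ≤ (v:Fin 9 → ℤ) 2)
    (h3 : (a:Fin 9 → ℤ) 3 ≤ (v:Fin 9 → ℤ) 3) (h4 : (a:Fin 9 → ℤ) 4 ≤ (v:Fin 9 → ℤ) 4)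
    (h5 : (a:Fin 9 → ℤ) 5 ≤ (v:Fin 9 → ℤ) 5) (h6 : (a:Fin 9 → ℤ) 6 ≤ (v:Fin 9 → ℤ) 6)
    (h7 : (a:Fin 9 → ℤ) 7 ≤ (v:Fin 9 → ℤ) 7) (h8 : (a:Fin 9 → ℤ) 8 ≤ (v:Fin 9 → ℤ) 8) :
    ∀ i, (a:Fin 9 → ℤ) i ≤ (v:Fin 9 → ℤ) i :=
  fun i => by fin_cases i <;> assumption

lemma ext6 (u v : latticeTM) (h0 : (u:Fin 6 → ℤ) 0 = (v:Fin 6 → ℤ) 0)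
    (h1 : (u:Fin 6 → ℤ) 1 = (v:Fin 6 → ℤ) 1) (h2 : (u:Fin 6 → ℤ) 2 = (v:Fin 6 → ℤ) 2)
    (h3 : (u:Fin 6 → ℤ) 3 = (v:Fin 6 → ℤ) 3) (h4 : (u:Fin 6 → ℤ) 4 = (v:Fin 6 → ℤ) 4)
    (h5 : (u:Fin 6 → ℤ) 5 = (v:Fin 6 → ℤ) 5) : u = v :=
  Subtype.ext (funext fun i => by fin_cases i <;> assumption)
lemma atom_AY1 : Atom AY1 := by
  refine ⟨by intro i; fin_cases i <;> decide, fun h => ?_, ?_⟩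
  · have := congrFun (congrArg Subtype.val h) 0
    exact absurd this (by decide)
  · intro u w hu hw h
    have hv : ∀ i, (u : Fin 9 → ℤ) i + (w : Fin 9 → ℤ) i = (AY1 : Fin 9 → ℤ) i :=
      fun i => congrFun (congrArg Subtype.val h) i
    obtain ⟨cu1, cu2⟩ := u.2
    obtain ⟨cw1, cw2⟩ := w.2
    have e0 : (u : Fin 9 → ℤ) 0 + (w : Fin 9 → ℤ) 0 = 1 := hv 0
    have e1 : (u : Fin 9 → ℤ) 1 + (w : Fin 9 → ℤ) 1 = 0 := hv 1
    have e2 : (u : Fin 9 → ℤ) 2 + (w : Fin 9 → ℤ) 2 = 0 := hv 2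
    have e3 : (u : Fin 9 → ℤ) 3 + (w : Fin 9 → ℤ) 3 = 0 := hv 3
    have e4 : (u : Fin 9 → ℤ) 4 + (w : Fin 9 → ℤ) 4 = 0 := hv 4
    have e5 : (u : Fin 9 → ℤ) 5 + (w : Fin 9 → ℤ) 5 = 0 := hv 5
    have e6 : (u : Fin 9 → ℤ) 6 + (w : Fin 9 → ℤ) 6 = 0 := hv 6
    have e7 : (u : Fin 9 → ℤ) 7 + (w : Fin 9 → ℤ) 7 = 0 := hv 7
    have e8 : (u : Fin 9 → ℤ) 8 + (w : Fin 9 → ℤ) 8 = 0 := hv 8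
    have hu0 := hu 0; have hu1 := hu 1; have hu2 := hu 2; have hu3 := hu 3; have hu4 := hu 4
    have hu5 := hu 5; have hu6 := hu 6; have hu7 := hu 7; have hu8 := hu 8
    have hw0 := hw 0; have hw1 := hw 1; have hw2 := hw 2; have hw3 := hw 3; have hw4 := hw 4
    have hw5 := hw 5; have hw6 := hw 6; have hw7 := hw 7; have hw8 := hw 8
    rcases eq_or_ne ((u : Fin 9 → ℤ) 0) 0 with hp | hp
    · exact Or.inl (zero9 u (by omega) (by omega) (by omega) (by omega) (by omega)
        (by omega) (by omega) (by omega) (by omega))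
    · exact Or.inr (zero9 w (by omega) (by omega) (by omega) (by omega) (by omega)
        (by omega) (by omega) (by omega) (by omega))
lemma atom_AY2 : Atom AY2 := by
  refine ⟨by intro i; fin_cases i <;> decide, fun h => ?_, ?_⟩
  · have := congrFun (congrArg Subtype.val h) 1
    exact absurd this (by decide)
  · intro u w hu hw h
    have hv : ∀ i, (u : Fin 9 → ℤ) i + (w : Fin 9 → ℤ) i = (AY2 : Fin 9 → ℤ) i :=
      fun i => congrFun (congrArg Subtype.val h) i
    obtain ⟨cu1, cu2⟩ := u.2
    obtain ⟨cw1, cw2⟩ := w.2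
    have e0 : (u : Fin 9 → ℤ) 0 + (w : Fin 9 → ℤ) 0 = 0 := hv 0
    have e1 : (u : Fin 9 → ℤ) 1 + (w : Fin 9 → ℤ) 1 = 1 := hv 1
    have e2 : (u : Fin 9 → ℤ) 2 + (w : Fin 9 → ℤ) 2 = 0 := hv 2
    have e3 : (u : Fin 9 → ℤ) 3 + (w : Fin 9 → ℤ) 3 = 0 := hv 3
    have e4 : (u : Fin 9 → ℤ) 4 + (w : Fin 9 → ℤ) 4 = 0 := hv 4
    have e5 : (u : Fin 9 → ℤ) 5 + (w : Fin 9 → ℤ) 5 = 0 := hv 5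
    have e6 : (u : Fin 9 → ℤ) 6 + (w : Fin 9 → ℤ) 6 = 0 := hv 6
    have e7 : (u : Fin 9 → ℤ) 7 + (w : Fin 9 → ℤ) 7 = 0 := hv 7
    have e8 : (u : Fin 9 → ℤ) 8 + (w : Fin 9 → ℤ) 8 = 0 := hv 8
    have hu0 := hu 0; have hu1 := hu 1; have hu2 := hu 2; have hu3 := hu 3; have hu4 := hu 4
    have hu5 := hu 5; have hu6 := hu 6; have hu7 := hu 7; have hu8 := hu 8
    have hw0 := hw 0; have hw1 := hw 1; have hw2 := hw 2; have hw3 := hw 3; have hw4 := hw 4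
    have hw5 := hw 5; have hw6 := hw 6; have hw7 := hw 7; have hw8 := hw 8
    rcases eq_or_ne ((u : Fin 9 → ℤ) 1) 0 with hp | hp
    · exact Or.inl (zero9 u (by omega) (by omega) (by omega) (by omega) (by omega)
        (by omega) (by omega) (by omega) (by omega))
    · exact Or.inr (zero9 w (by omega) (by omega) (by omega) (by omega) (by omega)
        (by omega) (by omega) (by omega) (by omega))
lemma atom_AY3 : Atom AY3 := by
  refine ⟨by intro i; fin_cases i <;> decide, fun h => ?_, ?_⟩
  · have := congrFun (congrArg Subtype.val h) 2
    exact absurd this (by decide)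
  · intro u w hu hw h
    have hv : ∀ i, (u : Fin 9 → ℤ) i + (w : Fin 9 → ℤ) i = (AY3 : Fin 9 → ℤ) i :=
      fun i => congrFun (congrArg Subtype.val h) i
    obtain ⟨cu1, cu2⟩ := u.2
    obtain ⟨cw1, cw2⟩ := w.2
    have e0 : (u : Fin 9 → ℤ) 0 + (w : Fin 9 → ℤ) 0 = 0 := hv 0
    have e1 : (u : Fin 9 → ℤ) 1 + (w : Fin 9 → ℤ) 1 = 0 := hv 1
    have e2 : (u : Fin 9 → ℤ) 2 + (w : Fin 9 → ℤ) 2 = 1 := hv 2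
    have e3 : (u : Fin 9 → ℤ) 3 + (w : Fin 9 → ℤ) 3 = 0 := hv 3
    have e4 : (u : Fin 9 → ℤ) 4 + (w : Fin 9 → ℤ) 4 = 0 := hv 4
    have e5 : (u : Fin 9 → ℤ) 5 + (w : Fin 9 → ℤ) 5 = 0 := hv 5
    have e6 : (u : Fin 9 → ℤ) 6 + (w : Fin 9 → ℤ) 6 = 0 := hv 6
    have e7 : (u : Fin 9 → ℤ) 7 + (w : Fin 9 → ℤ) 7 = 0 := hv 7
    have e8 : (u : Fin 9 → ℤ) 8 + (w : Fin 9 → ℤ) 8 = 0 := hv 8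
    have hu0 := hu 0; have hu1 := hu 1; have hu2 := hu 2; have hu3 := hu 3; have hu4 := hu 4
    have hu5 := hu 5; have hu6 := hu 6; have hu7 := hu 7; have hu8 := hu 8
    have hw0 := hw 0; have hw1 := hw 1; have hw2 := hw 2; have hw3 := hw 3; have hw4 := hw 4
    have hw5 := hw 5; have hw6 := hw 6; have hw7 := hw 7; have hw8 := hw 8
    rcases eq_or_ne ((u : Fin 9 → ℤ) 2) 0 with hp | hp
    · exact Or.inl (zero9 u (by omega) (by omega) (by omega) (by omega) (by omega)
        (by omega) (by omega) (by omega) (by omega))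
    · exact Or.inr (zero9 w (by omega) (by omega) (by omega) (by omega) (by omega)
        (by omega) (by omega) (by omega) (by omega))
lemma atom_AR1 : Atom AR1 := by
  refine ⟨by intro i; fin_cases i <;> decide, fun h => ?_, ?_⟩
  · have := congrFun (congrArg Subtype.val h) 3
    exact absurd this (by decide)
  · intro u w hu hw h
    have hv : ∀ i, (u : Fin 9 → ℤ) i + (w : Fin 9 → ℤ) i = (AR1 : Fin 9 → ℤ) i :=
      fun i => congrFun (congrArg Subtype.val h) i
    obtain ⟨cu1, cu2⟩ := u.2
    obtain ⟨cw1, cw2⟩ := w.2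
    have e0 : (u : Fin 9 → ℤ) 0 + (w : Fin 9 → ℤ) 0 = 0 := hv 0
    have e1 : (u : Fin 9 → ℤ) 1 + (w : Fin 9 → ℤ) 1 = 0 := hv 1
    have e2 : (u : Fin 9 → ℤ) 2 + (w : Fin 9 → ℤ) 2 = 0 := hv 2
    have e3 : (u : Fin 9 → ℤ) 3 + (w : Fin 9 → ℤ) 3 = 1 := hv 3
    have e4 : (u : Fin 9 → ℤ) 4 + (w : Fin 9 → ℤ) 4 = 0 := hv 4
    have e5 : (u : Fin 9 → ℤ) 5 + (w : Fin 9 → ℤ) 5 = 0 := hv 5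
    have e6 : (u : Fin 9 → ℤ) 6 + (w : Fin 9 → ℤ) 6 = 1 := hv 6
    have e7 : (u : Fin 9 → ℤ) 7 + (w : Fin 9 → ℤ) 7 = 0 := hv 7
    have e8 : (u : Fin 9 → ℤ) 8 + (w : Fin 9 → ℤ) 8 = 0 := hv 8
    have hu0 := hu 0; have hu1 := hu 1; have hu2 := hu 2; have hu3 := hu 3; have hu4 := hu 4
    have hu5 := hu 5; have hu6 := hu 6; have hu7 := hu 7; have hu8 := hu 8
    have hw0 := hw 0; have hw1 := hw 1; have hw2 := hw 2; have hw3 := hw 3; have hw4 := hw 4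
    have hw5 := hw 5; have hw6 := hw 6; have hw7 := hw 7; have hw8 := hw 8
    rcases eq_or_ne ((u : Fin 9 → ℤ) 3) 0 with hp | hp
    · exact Or.inl (zero9 u (by omega) (by omega) (by omega) (by omega) (by omega)
        (by omega) (by omega) (by omega) (by omega))
    · exact Or.inr (zero9 w (by omega) (by omega) (by omega) (by omega) (by omega)
        (by omega) (by omega) (by omega) (by omega))
lemma atom_AR2 : Atom AR2 := by
  refine ⟨by intro i; fin_cases i <;> decide, fun h => ?_, ?_⟩
  · have := congrFun (congrArg Subtype.val h) 4
    exact absurd this (by decide)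
  · intro u w hu hw h
    have hv : ∀ i, (u : Fin 9 → ℤ) i + (w : Fin 9 → ℤ) i = (AR2 : Fin 9 → ℤ) i :=
      fun i => congrFun (congrArg Subtype.val h) i
    obtain ⟨cu1, cu2⟩ := u.2
    obtain ⟨cw1, cw2⟩ := w.2
    have e0 : (u : Fin 9 → ℤ) 0 + (w : Fin 9 → ℤ) 0 = 0 := hv 0
    have e1 : (u : Fin 9 → ℤ) 1 + (w : Fin 9 → ℤ) 1 = 0 := hv 1
    have e2 : (u : Fin 9 → ℤ) 2 + (w : Fin 9 → ℤ) 2 = 0 := hv 2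
    have e3 : (u : Fin 9 → ℤ) 3 + (w : Fin 9 → ℤ) 3 = 0 := hv 3
    have e4 : (u : Fin 9 → ℤ) 4 + (w : Fin 9 → ℤ) 4 = 1 := hv 4
    have e5 : (u : Fin 9 → ℤ) 5 + (w : Fin 9 → ℤ) 5 = 0 := hv 5
    have e6 : (u : Fin 9 → ℤ) 6 + (w : Fin 9 → ℤ) 6 = 0 := hv 6
    have e7 : (u : Fin 9 → ℤ) 7 + (w : Fin 9 → ℤ) 7 = 1 := hv 7
    have e8 : (u : Fin 9 → ℤ) 8 + (w : Fin 9 → ℤ) 8 = 0 := hv 8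
    have hu0 := hu 0; have hu1 := hu 1; have hu2 := hu 2; have hu3 := hu 3; have hu4 := hu 4
    have hu5 := hu 5; have hu6 := hu 6; have hu7 := hu 7; have hu8 := hu 8
    have hw0 := hw 0; have hw1 := hw 1; have hw2 := hw 2; have hw3 := hw 3; have hw4 := hw 4
    have hw5 := hw 5; have hw6 := hw 6; have hw7 := hw 7; have hw8 := hw 8
    rcases eq_or_ne ((u : Fin 9 → ℤ) 4) 0 with hp | hp
    · exact Or.inl (zero9 u (by omega) (by omega) (by omega) (by omega) (by omega)
        (by omega) (by omega) (by omega) (by omega))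
    · exact Or.inr (zero9 w (by omega) (by omega) (by omega) (by omega) (by omega)
        (by omega) (by omega) (by omega) (by omega))
lemma atom_AR3 : Atom AR3 := by
  refine ⟨by intro i; fin_cases i <;> decide, fun h => ?_, ?_⟩
  · have := congrFun (congrArg Subtype.val h) 5
    exact absurd this (by decide)
  · intro u w hu hw h
    have hv : ∀ i, (u : Fin 9 → ℤ) i + (w : Fin 9 → ℤ) i = (AR3 : Fin 9 → ℤ) i :=
      fun i => congrFun (congrArg Subtype.val h) i
    obtain ⟨cu1, cu2⟩ := u.2
    obtain ⟨cw1, cw2⟩ := w.2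
    have e0 : (u : Fin 9 → ℤ) 0 + (w : Fin 9 → ℤ) 0 = 0 := hv 0
    have e1 : (u : Fin 9 → ℤ) 1 + (w : Fin 9 → ℤ) 1 = 0 := hv 1
    have e2 : (u : Fin 9 → ℤ) 2 + (w : Fin 9 → ℤ) 2 = 0 := hv 2
    have e3 : (u : Fin 9 → ℤ) 3 + (w : Fin 9 → ℤ) 3 = 0 := hv 3
    have e4 : (u : Fin 9 → ℤ) 4 + (w : Fin 9 → ℤ) 4 = 0 := hv 4
    have e5 : (u : Fin 9 → ℤ) 5 + (w : Fin 9 → ℤ) 5 = 1 := hv 5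
    have e6 : (u : Fin 9 → ℤ) 6 + (w : Fin 9 → ℤ) 6 = 0 := hv 6
    have e7 : (u : Fin 9 → ℤ) 7 + (w : Fin 9 → ℤ) 7 = 0 := hv 7
    have e8 : (u : Fin 9 → ℤ) 8 + (w : Fin 9 → ℤ) 8 = 1 := hv 8
    have hu0 := hu 0; have hu1 := hu 1; have hu2 := hu 2; have hu3 := hu 3; have hu4 := hu 4
    have hu5 := hu 5; have hu6 := hu 6; have hu7 := hu 7; have hu8 := hu 8
    have hw0 := hw 0; have hw1 := hw 1; have hw2 := hw 2; have hw3 := hw 3; have hw4 := hw 4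
    have hw5 := hw 5; have hw6 := hw 6; have hw7 := hw 7; have hw8 := hw 8
    rcases eq_or_ne ((u : Fin 9 → ℤ) 5) 0 with hp | hp
    · exact Or.inl (zero9 u (by omega) (by omega) (by omega) (by omega) (by omega)
        (by omega) (by omega) (by omega) (by omega))
    · exact Or.inr (zero9 w (by omega) (by omega) (by omega) (by omega) (by omega)
        (by omega) (by omega) (by omega) (by omega))
lemma atom_AP : Atom AP := by
  refine ⟨by intro i; fin_cases i <;> decide, fun h => ?_, ?_⟩
  · have := congrFun (congrArg Subtype.val h) 3
    exact absurd this (by decide)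
  · intro u w hu hw h
    have hv : ∀ i, (u : Fin 9 → ℤ) i + (w : Fin 9 → ℤ) i = (AP : Fin 9 → ℤ) i :=
      fun i => congrFun (congrArg Subtype.val h) i
    obtain ⟨cu1, cu2⟩ := u.2
    obtain ⟨cw1, cw2⟩ := w.2
    have e0 : (u : Fin 9 → ℤ) 0 + (w : Fin 9 → ℤ) 0 = 0 := hv 0
    have e1 : (u : Fin 9 → ℤ) 1 + (w : Fin 9 → ℤ) 1 = 0 := hv 1
    have e2 : (u : Fin 9 → ℤ) 2 + (w : Fin 9 → ℤ) 2 = 0 := hv 2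
    have e3 : (u : Fin 9 → ℤ) 3 + (w : Fin 9 → ℤ) 3 = 1 := hv 3
    have e4 : (u : Fin 9 → ℤ) 4 + (w : Fin 9 → ℤ) 4 = 0 := hv 4
    have e5 : (u : Fin 9 → ℤ) 5 + (w : Fin 9 → ℤ) 5 = 1 := hv 5
    have e6 : (u : Fin 9 → ℤ) 6 + (w : Fin 9 → ℤ) 6 = 0 := hv 6
    have e7 : (u : Fin 9 → ℤ) 7 + (w : Fin 9 → ℤ) 7 = 1 := hv 7
    have e8 : (u : Fin 9 → ℤ) 8 + (w : Fin 9 → ℤ) 8 = 0 := hv 8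
    have hu0 := hu 0; have hu1 := hu 1; have hu2 := hu 2; have hu3 := hu 3; have hu4 := hu 4
    have hu5 := hu 5; have hu6 := hu 6; have hu7 := hu 7; have hu8 := hu 8
    have hw0 := hw 0; have hw1 := hw 1; have hw2 := hw 2; have hw3 := hw 3; have hw4 := hw 4
    have hw5 := hw 5; have hw6 := hw 6; have hw7 := hw 7; have hw8 := hw 8
    rcases eq_or_ne ((u : Fin 9 → ℤ) 3) 0 with hp | hp
    · exact Or.inl (zero9 u (by omega) (by omega) (by omega) (by omega) (by omega)
        (by omega) (by omega) (by omega) (by omega))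
    · exact Or.inr (zero9 w (by omega) (by omega) (by omega) (by omega) (by omega)
        (by omega) (by omega) (by omega) (by omega))
lemma atom_AQ : Atom AQ := by
  refine ⟨by intro i; fin_cases i <;> decide, fun h => ?_, ?_⟩
  · have := congrFun (congrArg Subtype.val h) 4
    exact absurd this (by decide)
  · intro u w hu hw h
    have hv : ∀ i, (u : Fin 9 → ℤ) i + (w : Fin 9 → ℤ) i = (AQ : Fin 9 → ℤ) i :=
      fun i => congrFun (congrArg Subtype.val h) i
    obtain ⟨cu1, cu2⟩ := u.2
    obtain ⟨cw1, cw2⟩ := w.2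
    have e0 : (u : Fin 9 → ℤ) 0 + (w : Fin 9 → ℤ) 0 = 0 := hv 0
    have e1 : (u : Fin 9 → ℤ) 1 + (w : Fin 9 → ℤ) 1 = 0 := hv 1
    have e2 : (u : Fin 9 → ℤ) 2 + (w : Fin 9 → ℤ) 2 = 0 := hv 2
    have e3 : (u : Fin 9 → ℤ) 3 + (w : Fin 9 → ℤ) 3 = 0 := hv 3
    have e4 : (u : Fin 9 → ℤ) 4 + (w : Fin 9 → ℤ) 4 = 1 := hv 4
    have e5 : (u : Fin 9 → ℤ) 5 + (w : Fin 9 → ℤ) 5 = 0 := hv 5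
    have e6 : (u : Fin 9 → ℤ) 6 + (w : Fin 9 → ℤ) 6 = 1 := hv 6
    have e7 : (u : Fin 9 → ℤ) 7 + (w : Fin 9 → ℤ) 7 = 0 := hv 7
    have e8 : (u : Fin 9 → ℤ) 8 + (w : Fin 9 → ℤ) 8 = 1 := hv 8
    have hu0 := hu 0; have hu1 := hu 1; have hu2 := hu 2; have hu3 := hu 3; have hu4 := hu 4
    have hu5 := hu 5; have hu6 := hu 6; have hu7 := hu 7; have hu8 := hu 8
    have hw0 := hw 0; have hw1 := hw 1; have hw2 := hw 2; have hw3 := hw 3; have hw4 := hw 4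
    have hw5 := hw 5; have hw6 := hw 6; have hw7 := hw 7; have hw8 := hw 8
    rcases eq_or_ne ((u : Fin 9 → ℤ) 4) 0 with hp | hp
    · exact Or.inl (zero9 u (by omega) (by omega) (by omega) (by omega) (by omega)
        (by omega) (by omega) (by omega) (by omega))
    · exact Or.inr (zero9 w (by omega) (by omega) (by omega) (by omega) (by omega)
        (by omega) (by omega) (by omega) (by omega))

lemma atom_classify (v : Lbz) (hv : Atom v) :
    v = AY1 ∨ v = AY2 ∨ v = AY3 ∨ v = AR1 ∨ v = AR2 ∨ v = AR3 ∨ v = AP ∨ v = AQ := by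
  obtain ⟨hpos, hne, hind⟩ := hv
  obtain ⟨c1, c2⟩ := v.2
  have h0 := hpos 0; have h1 := hpos 1; have h2 := hpos 2; have h3 := hpos 3
  have h4 := hpos 4; have h5 := hpos 5; have h6 := hpos 6; have h7 := hpos 7
  have h8 := hpos 8
  have hvne : ¬ ((v:Fin 9 → ℤ) 0 = 0 ∧ (v:Fin 9 → ℤ) 1 = 0 ∧ (v:Fin 9 → ℤ) 2 = 0 ∧
      (v:Fin 9 → ℤ) 3 = 0 ∧ (v:Fin 9 → ℤ) 4 = 0 ∧ (v:Fin 9 → ℤ) 5 = 0 ∧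
      (v:Fin 9 → ℤ) 6 = 0 ∧ (v:Fin 9 → ℤ) 7 = 0 ∧ (v:Fin 9 → ℤ) 8 = 0) := by
    rintro ⟨z0,z1,z2,z3,z4,z5,z6,z7,z8⟩
    exact hne (zero9 v z0 z1 z2 z3 z4 z5 z6 z7 z8)
  suffices hbelow : ∃ a : Lbz,
      (a = AY1 ∨ a = AY2 ∨ a = AY3 ∨ a = AR1 ∨ a = AR2 ∨ a = AR3 ∨ a = AP ∨ a = AQ) ∧
      (∀ i, (a:Fin 9 → ℤ) i ≤ (v:Fin 9 → ℤ) i) by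
    obtain ⟨a, hmem8, hle⟩ := hbelow
    have hane : a ≠ 0 := by
      rcases hmem8 with rfl|rfl|rfl|rfl|rfl|rfl|rfl|rfl <;>
        first
          | exact atom_AY1.2.1 | exact atom_AY2.2.1 | exact atom_AY3.2.1
          | exact atom_AR1.2.1 | exact atom_AR2.2.1 | exact atom_AR3.2.1
          | exact atom_AP.2.1 | exact atom_AQ.2.1
    have habz : a ∈ BZset := by
      rcases hmem8 with rfl|rfl|rfl|rfl|rfl|rfl|rfl|rfl <;>
        first
          | exact atom_AY1.1 | exact atom_AY2.1 | exact atom_AY3.1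
          | exact atom_AR1.1 | exact atom_AR2.1 | exact atom_AR3.1
          | exact atom_AP.1 | exact atom_AQ.1
    have hsub : (v - a : Lbz) ∈ BZset := by
      intro i
      have hrw : ((v - a : Lbz) : Fin 9 → ℤ) i = (v:Fin 9 → ℤ) i - (a:Fin 9 → ℤ) i := rfl
      rw [hrw]
      have := hle i
      omega
    have hd := hind a (v - a) habz hsub (by abel)
    rcases hd with h|h
    · exact absurd h hane
    · have hva : v = a := by
        have : v - a + a = 0 + a := by rw [h]
        simpa using this
      rw [hva]; exact hmem8
  rcases h0.lt_or_eq with q0 | q0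
  · exact ⟨AY1, Or.inl rfl, le9 _ _ (by show (1:ℤ) ≤ _; omega) (by show (0:ℤ) ≤ _; omega) (by show (0:ℤ) ≤ _; omega) (by show (0:ℤ) ≤ _; omega) (by show (0:ℤ) ≤ _; omega) (by show (0:ℤ) ≤ _; omega) (by show (0:ℤ) ≤ _; omega) (by show (0:ℤ) ≤ _; omega) (by show (0:ℤ) ≤ _; omega)⟩
  rcases h1.lt_or_eq with q1 | q1
  · exact ⟨AY2, Or.inr (Or.inl rfl), le9 _ _ (by show (0:ℤ) ≤ _; omega) (by show (1:ℤ) ≤ _; omega) (by show (0:ℤ) ≤ _; omega) (by show (0:ℤ) ≤ _; omega) (by show (0:ℤ) ≤ _; omega) (by show (0:ℤ) ≤ _; omega) (by show (0:ℤ) ≤ _; omega) (by show (0:ℤ) ≤ _; omega) (by show (0:ℤ) ≤ _; omega)⟩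
  rcases h2.lt_or_eq with q2 | q2
  · exact ⟨AY3, Or.inr (Or.inr (Or.inl rfl)), le9 _ _ (by show (0:ℤ) ≤ _; omega) (by show (0:ℤ) ≤ _; omega) (by show (1:ℤ) ≤ _; omega) (by show (0:ℤ) ≤ _; omega) (by show (0:ℤ) ≤ _; omega) (by show (0:ℤ) ≤ _; omega) (by show (0:ℤ) ≤ _; omega) (by show (0:ℤ) ≤ _; omega) (by show (0:ℤ) ≤ _; omega)⟩
  rcases lt_trichotomy ((v:Fin 9 → ℤ) 3 - (v:Fin 9 → ℤ) 6) 0 with qs | qs | qs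
  · refine ⟨AQ, Or.inr (Or.inr (Or.inr (Or.inr (Or.inr (Or.inr (Or.inr rfl)))))), le9 _ _ (by show (0:ℤ) ≤ _; omega) (by show (0:ℤ) ≤ _; omega) (by show (0:ℤ) ≤ _; omega) (by show (0:ℤ) ≤ _; omega) (by show (1:ℤ) ≤ _; omega) (by show (0:ℤ) ≤ _; omega) (by show (1:ℤ) ≤ _; omega) (by show (0:ℤ) ≤ _; omega) (by show (1:ℤ) ≤ _; omega)⟩
  · rcases h3.lt_or_eq with q3 | q3
    · exact ⟨AR1, Or.inr (Or.inr (Or.inr (Or.inl rfl))), le9 _ _ (by show (0:ℤ) ≤ _; omega) (by show (0:ℤ) ≤ _; omega) (by show (0:ℤ) ≤ _; omega) (by show (1:ℤ) ≤ _; omega) (by show (0:ℤ) ≤ _; omega) (by show (0:ℤ) ≤ _; omega) (by show (1:ℤ) ≤ _; omega) (by show (0:ℤ) ≤ _; omega) (by show (0:ℤ) ≤ _; omega)⟩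
    rcases h4.lt_or_eq with q4 | q4
    · exact ⟨AR2, Or.inr (Or.inr (Or.inr (Or.inr (Or.inl rfl)))), le9 _ _ (by show (0:ℤ) ≤ _; omega) (by show (0:ℤ) ≤ _; omega) (by show (0:ℤ) ≤ _; omega) (by show (0:ℤ) ≤ _; omega) (by show (1:ℤ) ≤ _; omega) (by show (0:ℤ) ≤ _; omega) (by show (0:ℤ) ≤ _; omega) (by show (1:ℤ) ≤ _; omega) (by show (0:ℤ) ≤ _; omega)⟩
    rcases h5.lt_or_eq with q5 | q5
    · exact ⟨AR3, Or.inr (Or.inr (Or.inr (Or.inr (Or.inr (Or.inl rfl))))), le9 _ _ (by show (0:ℤ) ≤ _; omega) (by show (0:ℤ) ≤ _; omega) (by show (0:ℤ) ≤ _; omega) (by show (0:ℤ) ≤ _; omega) (by show (0:ℤ) ≤ _; omega) (by show (1:ℤ) ≤ _; omega) (by show (0:ℤ) ≤ _; omega) (by show (0:ℤ) ≤ _; omega) (by show (1:ℤ) ≤ _; omega)⟩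
    · exact absurd ⟨by omega, by omega, by omega, by omega, by omega, by omega,
        by omega, by omega, by omega⟩ hvne
  · refine ⟨AP, Or.inr (Or.inr (Or.inr (Or.inr (Or.inr (Or.inr (Or.inl rfl)))))), le9 _ _ (by show (0:ℤ) ≤ _; omega) (by show (0:ℤ) ≤ _; omega) (by show (0:ℤ) ≤ _; omega) (by show (1:ℤ) ≤ _; omega) (by show (0:ℤ) ≤ _; omega) (by show (1:ℤ) ≤ _; omega) (by show (0:ℤ) ≤ _; omega) (by show (1:ℤ) ≤ _; omega) (by show (0:ℤ) ≤ _; omega)⟩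

def prL : Lbz →ₗ[ℤ] latticeTM where
  toFun := prM
  map_add' := by
    intro u w
    refine ext6 _ _ ?_ ?_ ?_ ?_ ?_ ?_
    · show ((u+w:Lbz):Fin 9 → ℤ) 1 + ((u+w:Lbz):Fin 9 → ℤ) 6
        = ((u:Fin 9 → ℤ) 1 + (u:Fin 9 → ℤ) 6) + ((w:Fin 9 → ℤ) 1 + (w:Fin 9 → ℤ) 6)
      simp only [Submodule.coe_add, Pi.add_apply]; ring
    · show ((u+w:Lbz):Fin 9 → ℤ) 2 + ((u+w:Lbz):Fin 9 → ℤ) 7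
        = ((u:Fin 9 → ℤ) 2 + (u:Fin 9 → ℤ) 7) + ((w:Fin 9 → ℤ) 2 + (w:Fin 9 → ℤ) 7)
      simp only [Submodule.coe_add, Pi.add_apply]; ring
    · show ((u+w:Lbz):Fin 9 → ℤ) 2 + ((u+w:Lbz):Fin 9 → ℤ) 8
        = ((u:Fin 9 → ℤ) 2 + (u:Fin 9 → ℤ) 8) + ((w:Fin 9 → ℤ) 2 + (w:Fin 9 → ℤ) 8)
      simp only [Submodule.coe_add, Pi.add_apply]; ring
    · show ((u+w:Lbz):Fin 9 → ℤ) 0 + ((u+w:Lbz):Fin 9 → ℤ) 3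
        = ((u:Fin 9 → ℤ) 0 + (u:Fin 9 → ℤ) 3) + ((w:Fin 9 → ℤ) 0 + (w:Fin 9 → ℤ) 3)
      simp only [Submodule.coe_add, Pi.add_apply]; ring
    · show ((u+w:Lbz):Fin 9 → ℤ) 0 + ((u+w:Lbz):Fin 9 → ℤ) 4
        = ((u:Fin 9 → ℤ) 0 + (u:Fin 9 → ℤ) 4) + ((w:Fin 9 → ℤ) 0 + (w:Fin 9 → ℤ) 4)
      simp only [Submodule.coe_add, Pi.add_apply]; ring
    · show ((u+w:Lbz):Fin 9 → ℤ) 1 + ((u+w:Lbz):Fin 9 → ℤ) 5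
        = ((u:Fin 9 → ℤ) 1 + (u:Fin 9 → ℤ) 5) + ((w:Fin 9 → ℤ) 1 + (w:Fin 9 → ℤ) 5)
      simp only [Submodule.coe_add, Pi.add_apply]; ring
  map_smul' := by
    intro m u
    refine ext6 _ _ ?_ ?_ ?_ ?_ ?_ ?_
    · show ((m • u:Lbz):Fin 9 → ℤ) 1 + ((m • u:Lbz):Fin 9 → ℤ) 6
        = m * ((u:Fin 9 → ℤ) 1 + (u:Fin 9 → ℤ) 6)
      simp only [Submodule.coe_smul, Pi.smul_apply, smul_eq_mul]; ring
    · show ((m • u:Lbz):Fin 9 → ℤ) 2 + ((m • u:Lbz):Fin 9 → ℤ) 7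
        = m * ((u:Fin 9 → ℤ) 2 + (u:Fin 9 → ℤ) 7)
      simp only [Submodule.coe_smul, Pi.smul_apply, smul_eq_mul]; ring
    · show ((m • u:Lbz):Fin 9 → ℤ) 2 + ((m • u:Lbz):Fin 9 → ℤ) 8
        = m * ((u:Fin 9 → ℤ) 2 + (u:Fin 9 → ℤ) 8)
      simp only [Submodule.coe_smul, Pi.smul_apply, smul_eq_mul]; ring
    · show ((m • u:Lbz):Fin 9 → ℤ) 0 + ((m • u:Lbz):Fin 9 → ℤ) 3
        = m * ((u:Fin 9 → ℤ) 0 + (u:Fin 9 → ℤ) 3)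
      simp only [Submodule.coe_smul, Pi.smul_apply, smul_eq_mul]; ring
    · show ((m • u:Lbz):Fin 9 → ℤ) 0 + ((m • u:Lbz):Fin 9 → ℤ) 4
        = m * ((u:Fin 9 → ℤ) 0 + (u:Fin 9 → ℤ) 4)
      simp only [Submodule.coe_smul, Pi.smul_apply, smul_eq_mul]; ring
    · show ((m • u:Lbz):Fin 9 → ℤ) 1 + ((m • u:Lbz):Fin 9 → ℤ) 5
        = m * ((u:Fin 9 → ℤ) 1 + (u:Fin 9 → ℤ) 5)
      simp only [Submodule.coe_smul, Pi.smul_apply, smul_eq_mul]; ring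

lemma prL_surj : Function.Surjective prL := by
  intro t
  obtain ⟨k, hk⟩ := t.2
  have e0 : (t:Fin 6 → ℤ) 0 + (t:Fin 6 → ℤ) 2 + (t:Fin 6 → ℤ) 4 - (t:Fin 6 → ℤ) 1 - (t:Fin 6 → ℤ) 3 - (t:Fin 6 → ℤ) 5 = 3 * k := hk
  have hmem : (![((t:Fin 6 → ℤ) 2 - (t:Fin 6 → ℤ) 5 - (t:Fin 6 → ℤ) 1 + (t:Fin 6 → ℤ) 4 - 2*k), 0, ((t:Fin 6 → ℤ) 2 - (t:Fin 6 → ℤ) 5 - k), (t:Fin 6 → ℤ) 3 - ((t:Fin 6 → ℤ) 2 - (t:Fin 6 → ℤ) 5 - (t:Fin 6 → ℤ) 1 + (t:Fin 6 → ℤ) 4 - 2*k), (t:Fin 6 → ℤ) 4 - ((t:Fin 6 → ℤ) 2 - (t:Fin 6 → ℤ) 5 - (t:Fin 6 → ℤ) 1 + (t:Fin 6 → ℤ) 4 - 2*k), (t:Fin 6 → ℤ) 5, (t:Fin 6 → ℤ) 0, (t:Fin 6 → ℤ) 1 - ((t:Fin 6 → ℤ) 2 - (t:Fin 6 → ℤ)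 5 - k), (t:Fin 6 → ℤ) 2 - ((t:Fin 6 → ℤ) 2 - (t:Fin 6 → ℤ) 5 - k)]
      : Fin 9 → ℤ) ∈ Lbz := by
    refine ⟨?_, ?_⟩
    · show ((t:Fin 6 → ℤ) 3 - ((t:Fin 6 → ℤ) 2 - (t:Fin 6 → ℤ) 5 - (t:Fin 6 → ℤ) 1 + (t:Fin 6 → ℤ) 4 - 2*k)) - (t:Fin 6 → ℤ) 0 = ((t:Fin 6 → ℤ) 1 - ((t:Fin 6 → ℤ) 2 - (t:Fin 6 → ℤ) 5 - k)) - ((t:Fin 6 → ℤ) 4 - ((t:Fin 6 → ℤ) 2 - (t:Fin 6 → ℤ) 5 - (t:Fin 6 → ℤ) 1 + (t:Fin 6 → ℤ) 4 - 2*k)); omega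
    · show ((t:Fin 6 → ℤ) 1 - ((t:Fin 6 → ℤ) 2 - (t:Fin 6 → ℤ) 5 - k)) - ((t:Fin 6 → ℤ) 4 - ((t:Fin 6 → ℤ) 2 - (t:Fin 6 → ℤ) 5 - (t:Fin 6 → ℤ) 1 + (t:Fin 6 → ℤ) 4 - 2*k)) = (t:Fin 6 → ℤ) 5 - ((t:Fin 6 → ℤ) 2 - ((t:Fin 6 → ℤ) 2 - (t:Fin 6 → ℤ) 5 - k)); omega
  refine ⟨⟨_, hmem⟩, ext6 _ _ ?_ ?_ ?_ ?_ ?_ ?_⟩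
  · show (0:ℤ) + (t:Fin 6 → ℤ) 0 = (t:Fin 6 → ℤ) 0; omega
  · show ((t:Fin 6 → ℤ) 2 - (t:Fin 6 → ℤ) 5 - k) + ((t:Fin 6 → ℤ) 1 - ((t:Fin 6 → ℤ) 2 - (t:Fin 6 → ℤ) 5 - k)) = (t:Fin 6 → ℤ) 1; omega
  · show ((t:Fin 6 → ℤ) 2 - (t:Fin 6 → ℤ) 5 - k) + ((t:Fin 6 → ℤ) 2 - ((t:Fin 6 → ℤ) 2 - (t:Fin 6 → ℤ) 5 - k)) = (t:Fin 6 → ℤ) 2; omega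
  · show ((t:Fin 6 → ℤ) 2 - (t:Fin 6 → ℤ) 5 - (t:Fin 6 → ℤ) 1 + (t:Fin 6 → ℤ) 4 - 2*k) + ((t:Fin 6 → ℤ) 3 - ((t:Fin 6 → ℤ) 2 - (t:Fin 6 → ℤ) 5 - (t:Fin 6 → ℤ) 1 + (t:Fin 6 → ℤ) 4 - 2*k)) = (t:Fin 6 → ℤ) 3; omega
  · show ((t:Fin 6 → ℤ) 2 - (t:Fin 6 → ℤ) 5 - (t:Fin 6 → ℤ) 1 + (t:Fin 6 → ℤ) 4 - 2*k) + ((t:Fin 6 → ℤ) 4 - ((t:Fin 6 → ℤ) 2 - (t:Fin 6 → ℤ) 5 - (t:Fin 6 → ℤ) 1 + (t:Fin 6 → ℤ) 4 - 2*k)) = (t:Fin 6 → ℤ) 4; omega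
  · show (0:ℤ) + (t:Fin 6 → ℤ) 5 = (t:Fin 6 → ℤ) 5; omega

lemma prL_dE : prL dE = 0 := by
  apply Subtype.ext; funext i; fin_cases i <;> rfl

lemma smul_dE_coord : ∀ (a : ℤ) (i : Fin 9),
    ((a • dE : Lbz) : Fin 9 → ℤ) i = a * (dE : Fin 9 → ℤ) i :=
  fun a i => rfl

lemma ker_prL : LinearMap.ker prL = Submodule.span ℤ {dE} := by
  ext T
  simp only [LinearMap.mem_ker, Submodule.mem_span_singleton]
  constructor
  · intro h
    have hv : ∀ i, pr (T : Fin 9 → ℤ) i = 0 :=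
      fun i => congrFun (congrArg Subtype.val h) i
    have p0 : (T:Fin 9 → ℤ) 1 + (T:Fin 9 → ℤ) 6 = 0 := hv 0
    have p1 : (T:Fin 9 → ℤ) 2 + (T:Fin 9 → ℤ) 7 = 0 := hv 1
    have p2 : (T:Fin 9 → ℤ) 2 + (T:Fin 9 → ℤ) 8 = 0 := hv 2
    have p3 : (T:Fin 9 → ℤ) 0 + (T:Fin 9 → ℤ) 3 = 0 := hv 3
    have p4 : (T:Fin 9 → ℤ) 0 + (T:Fin 9 → ℤ) 4 = 0 := hv 4
    have p5 : (T:Fin 9 → ℤ) 1 + (T:Fin 9 → ℤ) 5 = 0 := hv 5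
    obtain ⟨c1, c2⟩ := T.2
    refine ⟨(T:Fin 9 → ℤ) 0, ext9 _ _ ?_ ?_ ?_ ?_ ?_ ?_ ?_ ?_ ?_⟩
    · show (T:Fin 9 → ℤ) 0 * 1 = (T:Fin 9 → ℤ) 0; omega
    · show (T:Fin 9 → ℤ) 0 * 1 = (T:Fin 9 → ℤ) 1; omega
    · show (T:Fin 9 → ℤ) 0 * 1 = (T:Fin 9 → ℤ) 2; omega
    · show (T:Fin 9 → ℤ) 0 * (-1) = (T:Fin 9 → ℤ) 3; omega
    · show (T:Fin 9 → ℤ) 0 * (-1) = (T:Fin 9 → ℤ) 4; omega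
    · show (T:Fin 9 → ℤ) 0 * (-1) = (T:Fin 9 → ℤ) 5; omega
    · show (T:Fin 9 → ℤ) 0 * (-1) = (T:Fin 9 → ℤ) 6; omega
    · show (T:Fin 9 → ℤ) 0 * (-1) = (T:Fin 9 → ℤ) 7; omega
    · show (T:Fin 9 → ℤ) 0 * (-1) = (T:Fin 9 → ℤ) 8; omega
  · rintro ⟨a, rfl⟩
    rw [map_smul, prL_dE, smul_zero]

def phi (v : Lbz) : ℤ := (v:Fin 9 → ℤ) 0 + (v:Fin 9 → ℤ) 1 + (v:Fin 9 → ℤ) 2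
def psi (v : Lbz) : ℤ := (v:Fin 9 → ℤ) 3 + (v:Fin 9 → ℤ) 4 + (v:Fin 9 → ℤ) 5
  + (v:Fin 9 → ℤ) 6 + (v:Fin 9 → ℤ) 7 + (v:Fin 9 → ℤ) 8

lemma phi_add (u w : Lbz) : phi (u + w) = phi u + phi w := by
  simp only [phi, Submodule.coe_add, Pi.add_apply]; ring

lemma psi_add (u w : Lbz) : psi (u + w) = psi u + psi w := by
  simp only [psi, Submodule.coe_add, Pi.add_apply]; ring

lemma rel_atoms : AR1 + AR2 + AR3 = AP + AQ := by
  apply Subtype.ext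
  show (AR1:Fin 9 → ℤ) + AR2 + AR3 = (AP:Fin 9 → ℤ) + AQ
  funext i; fin_cases i <;> decide

lemma dE_eq : dE = AY1 + AY2 + AY3 - AP - AQ := by
  apply Subtype.ext
  show (dE:Fin 9 → ℤ) = (AY1:Fin 9 → ℤ) + AY2 + AY3 - AP - AQ
  funext i; fin_cases i <;> decide

lemma val8 (v : Lbz)
    (h : v = AY1 ∨ v = AY2 ∨ v = AY3 ∨ v = AR1 ∨ v = AR2 ∨ v = AR3 ∨ v = AP ∨ v = AQ) :
    (phi v = 1 ∧ psi v = 0) ∨ (phi v = 0 ∧ psi v = 2) ∨ (phi v = 0 ∧ psi v = 3) := by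
  rcases h with rfl|rfl|rfl|rfl|rfl|rfl|rfl|rfl <;> decide

lemma psi3 (v : Lbz)
    (h : v = AY1 ∨ v = AY2 ∨ v = AY3 ∨ v = AR1 ∨ v = AR2 ∨ v = AR3 ∨ v = AP ∨ v = AQ)
    (hp : psi v = 3) : v = AP ∨ v = AQ := by
  rcases h with rfl|rfl|rfl|rfl|rfl|rfl|rfl|rfl <;>
    first
      | (left; rfl)
      | (right; rfl)
      | (exact absurd hp (by decide))

lemma psi2 (v : Lbz)
    (h : v = AY1 ∨ v = AY2 ∨ v = AY3 ∨ v = AR1 ∨ v = AR2 ∨ v = AR3 ∨ v = AP ∨ v = AQ)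
    (hp : psi v = 2) : v = AR1 ∨ v = AR2 ∨ v = AR3 := by
  rcases h with rfl|rfl|rfl|rfl|rfl|rfl|rfl|rfl <;>
    first
      | (left; rfl)
      | (right; left; rfl)
      | (right; right; rfl)
      | (exact absurd hp (by decide))

lemma ne_of_coord (u v : Lbz) (i : Fin 9) (h : (u:Fin 9 → ℤ) i ≠ (v:Fin 9 → ℤ) i) :
    u ≠ v := fun e => h (congrFun (congrArg Subtype.val e) i)

lemma atom_map (θ : Lbz ≃ₗ[ℤ] Lbz) (hmem : ∀ v : Lbz, v ∈ BZset ↔ θ v ∈ BZset)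
    (v : Lbz) (hv : Atom v) : Atom (θ v) := by
  obtain ⟨h1, h2, h3⟩ := hv
  refine ⟨(hmem v).1 h1, fun h => h2 ?_, ?_⟩
  · have := congrArg θ.symm h
    simpa using this
  · intro u w hu hw huw
    have h4 : θ.symm u + θ.symm w = v := by
      have := congrArg θ.symm huw
      simpa using this
    have hu' : θ.symm u ∈ BZset := (hmem (θ.symm u)).2 (by simpa using hu)
    have hw' : θ.symm w ∈ BZset := (hmem (θ.symm w)).2 (by simpa using hw)
    rcases h3 (θ.symm u) (θ.symm w) hu' hw' h4 with h | h
    · left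
      have := congrArg θ h
      simpa using this
    · right
      have := congrArg θ h
      simpa using this

lemma theta_core (θ : Lbz ≃ₗ[ℤ] Lbz) (hmem : ∀ v : Lbz, v ∈ BZset ↔ θ v ∈ BZset) :
    (θ AR1 = AR1 ∨ θ AR1 = AR2 ∨ θ AR1 = AR3) ∧
    (θ AR2 = AR1 ∨ θ AR2 = AR2 ∨ θ AR2 = AR3) ∧
    (θ AR3 = AR1 ∨ θ AR3 = AR2 ∨ θ AR3 = AR3) ∧
    (θ AP = AP ∨ θ AP = AQ) ∧ (θ AQ = AP ∨ θ AQ = AQ) := by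
  have cR1 := atom_classify _ (atom_map θ hmem _ atom_AR1)
  have cR2 := atom_classify _ (atom_map θ hmem _ atom_AR2)
  have cR3 := atom_classify _ (atom_map θ hmem _ atom_AR3)
  have cP := atom_classify _ (atom_map θ hmem _ atom_AP)
  have cQ := atom_classify _ (atom_map θ hmem _ atom_AQ)
  have heq : θ AR1 + θ AR2 + θ AR3 = θ AP + θ AQ := by
    have := congrArg θ rel_atoms
    simpa [map_add] using this
  have hphi : phi (θ AR1) + phi (θ AR2) + phi (θ AR3) = phi (θ AP) + phi (θ AQ) := by
    have := congrArg phi heq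
    simpa [phi_add] using this
  have hpsi : psi (θ AR1) + psi (θ AR2) + psi (θ AR3) = psi (θ AP) + psi (θ AQ) := by
    have := congrArg psi heq
    simpa [psi_add] using this
  have v1 := val8 _ cR1
  have v2 := val8 _ cR2
  have v3 := val8 _ cR3
  have v4 := val8 _ cP
  have v5 := val8 _ cQ
  have key : psi (θ AR1) = 2 ∧ psi (θ AR2) = 2 ∧ psi (θ AR3) = 2 ∧
      psi (θ AP) = 3 ∧ psi (θ AQ) = 3 := by
    rcases v1 with ⟨a1,b1⟩|⟨a1,b1⟩|⟨a1,b1⟩ <;> rcases v2 with ⟨a2,b2⟩|⟨a2,b2⟩|⟨a2,b2⟩ <;>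
      rcases v3 with ⟨a3,b3⟩|⟨a3,b3⟩|⟨a3,b3⟩ <;> rcases v4 with ⟨a4,b4⟩|⟨a4,b4⟩|⟨a4,b4⟩ <;>
      rcases v5 with ⟨a5,b5⟩|⟨a5,b5⟩|⟨a5,b5⟩ <;> omega
  exact ⟨psi2 _ cR1 key.1, psi2 _ cR2 key.2.1, psi2 _ cR3 key.2.2.1,
    psi3 _ cP key.2.2.2.1, psi3 _ cQ key.2.2.2.2⟩

lemma c_map (θ : Lbz ≃ₗ[ℤ] Lbz) (hmem : ∀ v : Lbz, v ∈ BZset ↔ θ v ∈ BZset)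
    (θ' : latticeTM ≃ₗ[ℤ] latticeTM) (hco : ∀ T : Lbz, prM (θ T) = θ' (prM T))
    (t : latticeTM) : c ((θ' t : Fin 6 → ℤ)) = c (t : Fin 6 → ℤ) := by
  apply Nat.card_congr
  have hmem' : ∀ v : Lbz, v ∈ BZset ↔ θ.symm v ∈ BZset := by
    intro v
    have h := hmem (θ.symm v)
    rw [θ.apply_symm_apply] at h
    exact h.symm
  have hco' : ∀ T : Lbz, prM (θ.symm T) = θ'.symm (prM T) := by
    intro T
    have h := hco (θ.symm T)
    rw [θ.apply_symm_apply] at h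
    rw [h, θ'.symm_apply_apply]
  refine
    { toFun := fun S => ⟨((θ.symm ⟨S.1, S.2.1.2⟩ : Lbz) : Fin 9 → ℤ),
        ⟨⟨(hmem' ⟨S.1, S.2.1.2⟩).1 S.2.1.1, (θ.symm ⟨S.1, S.2.1.2⟩).2⟩, by
          have hp : prM ⟨S.1, S.2.1.2⟩ = θ' t := Subtype.ext S.2.2
          have h := hco' ⟨S.1, S.2.1.2⟩
          rw [hp, θ'.symm_apply_apply] at h
          exact congrArg Subtype.val h⟩⟩
      invFun := fun S => ⟨((θ ⟨S.1, S.2.1.2⟩ : Lbz) : Fin 9 → ℤ),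
        ⟨⟨(hmem ⟨S.1, S.2.1.2⟩).1 S.2.1.1, (θ ⟨S.1, S.2.1.2⟩).2⟩, by
          have hp : prM ⟨S.1, S.2.1.2⟩ = t := Subtype.ext S.2.2
          have h := hco ⟨S.1, S.2.1.2⟩
          rw [hp] at h
          exact congrArg Subtype.val h⟩⟩
      left_inv := fun S => Subtype.ext (by
        show ((θ (θ.symm ⟨S.1, S.2.1.2⟩) : Lbz) : Fin 9 → ℤ) = S.1
        rw [θ.apply_symm_apply])
      right_inv := fun S => Subtype.ext (by
        show ((θ.symm (θ ⟨S.1, S.2.1.2⟩) : Lbz) : Fin 9 → ℤ) = S.1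
        rw [θ.symm_apply_apply]) }

theorem stmt9 (θ : Lbz ≃ₗ[ℤ] Lbz) (hθ : ⇑θ '' BZset = BZset) :
    ∃ θ' : latticeTM ≃ₗ[ℤ] latticeTM,
      (∀ T : Lbz, prM (θ T) = θ' (prM T)) ∧
      (∀ t : latticeTM, c ((θ' t : Fin 6 → ℤ)) = c (t : Fin 6 → ℤ)) ∧
      (∀ θ'' : latticeTM ≃ₗ[ℤ] latticeTM,
        (∀ T : Lbz, prM (θ T) = θ'' (prM T)) → θ'' = θ') := by
  have hmem : ∀ v : Lbz, v ∈ BZset ↔ θ v ∈ BZset := by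
    intro v
    constructor
    · intro h
      rw [← hθ]
      exact ⟨v, h, rfl⟩
    · intro h
      rw [← hθ] at h
      obtain ⟨w, hw, hwe⟩ := h
      have hwv : w = v := θ.injective hwe
      rwa [← hwv]
  have hmem' : ∀ v : Lbz, v ∈ BZset ↔ θ.symm v ∈ BZset := by
    intro v
    have h := hmem (θ.symm v)
    rw [θ.apply_symm_apply] at h
    exact h.symm
  obtain ⟨hR1, hR2, hR3, hP, hQ⟩ := theta_core θ hmem
  obtain ⟨hR1', hR2', hR3', hP', hQ'⟩ := theta_core θ.symm hmem'
  -- the images of the Y-atoms are Y-atoms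
  have hYin : ∀ y : Lbz, Atom y →
      (y = AY1 ∨ y = AY2 ∨ y = AY3) → (θ y = AY1 ∨ θ y = AY2 ∨ θ y = AY3) := by
    intro y hy hymem
    have hyne : (y ≠ AR1 ∧ y ≠ AR2 ∧ y ≠ AR3) ∧ (y ≠ AP ∧ y ≠ AQ) := by
      rcases hymem with rfl | rfl | rfl
      · exact ⟨⟨ne_of_coord _ _ 0 (by decide), ne_of_coord _ _ 0 (by decide),
          ne_of_coord _ _ 0 (by decide)⟩,
          ne_of_coord _ _ 0 (by decide), ne_of_coord _ _ 0 (by decide)⟩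
      · exact ⟨⟨ne_of_coord _ _ 1 (by decide), ne_of_coord _ _ 1 (by decide),
          ne_of_coord _ _ 1 (by decide)⟩,
          ne_of_coord _ _ 1 (by decide), ne_of_coord _ _ 1 (by decide)⟩
      · exact ⟨⟨ne_of_coord _ _ 2 (by decide), ne_of_coord _ _ 2 (by decide),
          ne_of_coord _ _ 2 (by decide)⟩,
          ne_of_coord _ _ 2 (by decide), ne_of_coord _ _ 2 (by decide)⟩
    have hsy : θ.symm (θ y) = y := θ.symm_apply_apply y
    rcases atom_classify _ (atom_map θ hmem _ hy) with h|h|h|h|h|h|h|h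
    · exact Or.inl h
    · exact Or.inr (Or.inl h)
    · exact Or.inr (Or.inr h)
    · exfalso
      rw [h] at hsy
      rcases hR1' with h2|h2|h2 <;> rw [hsy] at h2
      · exact hyne.1.1 h2
      · exact hyne.1.2.1 h2
      · exact hyne.1.2.2 h2
    · exfalso
      rw [h] at hsy
      rcases hR2' with h2|h2|h2 <;> rw [hsy] at h2
      · exact hyne.1.1 h2
      · exact hyne.1.2.1 h2
      · exact hyne.1.2.2 h2
    · exfalso
      rw [h] at hsy
      rcases hR3' with h2|h2|h2 <;> rw [hsy] at h2
      · exact hyne.1.1 h2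
      · exact hyne.1.2.1 h2
      · exact hyne.1.2.2 h2
    · exfalso
      rw [h] at hsy
      rcases hP' with h2|h2 <;> rw [hsy] at h2
      · exact hyne.2.1 h2
      · exact hyne.2.2 h2
    · exfalso
      rw [h] at hsy
      rcases hQ' with h2|h2 <;> rw [hsy] at h2
      · exact hyne.2.1 h2
      · exact hyne.2.2 h2
  have hY1 := hYin AY1 atom_AY1 (Or.inl rfl)
  have hY2 := hYin AY2 atom_AY2 (Or.inr (Or.inl rfl))
  have hY3 := hYin AY3 atom_AY3 (Or.inr (Or.inr rfl))
  have i12 : θ AY1 ≠ θ AY2 := fun h => ne_of_coord AY1 AY2 0 (by decide) (θ.injective h)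
  have i13 : θ AY1 ≠ θ AY3 := fun h => ne_of_coord AY1 AY3 0 (by decide) (θ.injective h)
  have i23 : θ AY2 ≠ θ AY3 := fun h => ne_of_coord AY2 AY3 1 (by decide) (θ.injective h)
  have iPQ : θ AP ≠ θ AQ := fun h => ne_of_coord AP AQ 3 (by decide) (θ.injective h)
  have hYsum : θ AY1 + θ AY2 + θ AY3 = AY1 + AY2 + AY3 := by
    rcases hY1 with h1|h1|h1 <;> rcases hY2 with h2|h2|h2 <;> rcases hY3 with h3|h3|h3 <;>
      first
        | (exact absurd (h1.trans h2.symm) i12)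
        | (exact absurd (h1.trans h3.symm) i13)
        | (exact absurd (h2.trans h3.symm) i23)
        | (rw [h1, h2, h3] <;> abel)
  have hPQsum : θ AP + θ AQ = AP + AQ := by
    rcases hP with h1|h1 <;> rcases hQ with h2|h2 <;>
      first
        | (exact absurd (h1.trans h2.symm) iPQ)
        | (rw [h1, h2] <;> abel)
  have hθd : θ dE = dE := by
    rw [dE_eq, map_sub, map_sub, map_add, map_add, hYsum, sub_sub, sub_sub, hPQsum]
  have hker : (LinearMap.ker prL).map (θ : Lbz →ₗ[ℤ] Lbz) = LinearMap.ker prL := by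
    rw [ker_prL, Submodule.map_span, Set.image_singleton]
    simp only [LinearEquiv.coe_coe]
    rw [hθd]
  let e := prL.quotKerEquivOfSurjective prL_surj
  let qE := Submodule.Quotient.equiv (LinearMap.ker prL) (LinearMap.ker prL) θ hker
  have he : ∀ T : Lbz, e (Submodule.Quotient.mk T) = prL T := by
    intro T
    rfl
  have hq : ∀ T : Lbz, qE (Submodule.Quotient.mk T) = Submodule.Quotient.mk (θ T) := by
    intro T
    rfl
  refine ⟨(e.symm.trans qE).trans e, ?_, ?_, ?_⟩
  case refine_1 =>
    intro T
    show prL (θ T) = e (qE (e.symm (prL T)))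
    rw [← he T, e.symm_apply_apply, hq T, he (θ T)]
  case refine_2 =>
    intro t
    apply c_map θ hmem
    intro T
    show prL (θ T) = e (qE (e.symm (prL T)))
    rw [← he T, e.symm_apply_apply, hq T, he (θ T)]
  case refine_3 =>
    intro θ'' hcom
    apply LinearEquiv.ext
    intro x
    obtain ⟨T, rfl⟩ := prL_surj x
    have h1 := hcom T
    have h2 : prM (θ T) = ((e.symm.trans qE).trans e) (prM T) := by
      show prL (θ T) = e (qE (e.symm (prL T)))
      rw [← he T, e.symm_apply_apply, hq T, he (θ T)]
    exact h1.symm.trans h2
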